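/- arXiv:0706.2679 — 3 statements merged into one kernel-verified Lean document; each statement's English description precedes it below -/
import Mathlib

section
/- Let X be a real random variable with sup_x P(|X - x| ≤ 1) ≤ 1 - p for some p ∈ (0,1], and let X' be an independent copy of X. Then P(|X - X'| ≥ 2) ≥ p^2/2. -/
/-!
Let `a` be a `p/2`-quantile of `X`, so that `P(X < a) ≤ p/2 ≤ P(X ≤ a)`. As
`P(a ≤ X ≤ a + 2) ≤ 1 - p`, the upper tail satisfies `P(X > a + 2) ≥ p/2`. The events
`{X ≤ a, X' > a + 2}` and `{X > a + 2, X' ≤ a}` are disjoint, both force `|X - X'| ≥ 2`, and by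
independence each has probability `P(X ≤ a) P(X > a + 2) ≥ p²/4`.
-/

open MeasureTheory ProbabilityTheory Set Filter Topology

namespace ProbabilityTheory

theorem exists_measureReal_Iio_le_le_measureReal_Iic (ν : Measure ℝ) [IsProbabilityMeasure ν]
    {t : ℝ} (ht0 : 0 < t) (ht1 : t < 1) :
    ∃ a, ν.real (Iio a) ≤ t ∧ t ≤ ν.real (Iic a) := by
  set S := {x | t ≤ cdf ν x}
  obtain ⟨b, hb⟩ := ((tendsto_cdf_atTop ν).eventually (lt_mem_nhds ht1)).exists
  obtain ⟨c, hc⟩ := eventually_atBot.1 ((tendsto_cdf_atBot ν).eventually (gt_mem_nhds ht0))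
  have hS : BddBelow S := ⟨c, fun x hx => le_of_not_ge fun hxc => (hc x hxc).not_ge hx⟩
  set a := sInf S
  have h_below : ∀ x < a, cdf ν x ≤ t := fun x hx =>
    (not_le.1 (notMem_of_lt_csInf (s := S) hx hS)).le
  have h_above : ∀ x > a, t ≤ cdf ν x := fun x hx => by
    obtain ⟨y, hyS, hyx⟩ := (csInf_lt_iff hS ⟨b, hb.le⟩).1 hx
    exact hyS.trans ((cdf ν).mono hyx.le)
  refine ⟨a, ?_, ?_⟩
  · have h_leftLim : Function.leftLim (cdf ν) a ≤ t :=
      le_of_tendsto ((cdf ν).mono.tendsto_leftLim a) (eventually_nhdsWithin_of_forall h_below)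
    have h_Iio : ν (Iio a) = ENNReal.ofReal (Function.leftLim (cdf ν) a) := by
      calc ν (Iio a) = (cdf ν).measure (Iio a) := by rw [measure_cdf]
        _ = _ := by rw [StieltjesFunction.measure_Iio _ (tendsto_cdf_atBot ν), sub_zero]
    rw [measureReal_def, h_Iio]
    exact ENNReal.toReal_le_of_le_ofReal ht0.le (ENNReal.ofReal_le_ofReal h_leftLim)
  · rw [← cdf_eq_real]
    exact ge_of_tendsto (((cdf ν).right_continuous a).mono Ioi_subset_Ici_self)
      (eventually_nhdsWithin_of_forall h_above)

theorem measureReal_Iio_add_Icc_add_Ioi (ν : Measure ℝ) [IsProbabilityMeasure ν] {a b : ℝ}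
    (hab : a ≤ b) : ν.real (Iio a) + ν.real (Icc a b) + ν.real (Ioi b) = 1 := by
  rw [← measureReal_union ((Iio_disjoint_Ici le_rfl).mono_right Icc_subset_Ici_self)
      measurableSet_Icc, Iio_union_Icc_eq_Iic hab, ← compl_Iic,
    probReal_compl_eq_one_sub measurableSet_Iic]
  ring

theorem IndepFun.two_mul_measureReal_mul_le_measureReal_le_dist {Ω E : Type*}
    [MeasurableSpace Ω] {μ : Measure Ω} [IsFiniteMeasure μ] [PseudoMetricSpace E]
    [MeasurableSpace E] {X X' : Ω → E} (hX : Measurable X) (hX' : Measurable X')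
    (hindep : IndepFun X X' μ) (hid : μ.map X = μ.map X') {A B : Set E}
    (hA : MeasurableSet A) (hB : MeasurableSet B) {c : ℝ} (hc : 0 < c)
    (hAB : ∀ x ∈ A, ∀ y ∈ B, c ≤ dist x y) :
    2 * (μ.real (X ⁻¹' A) * μ.real (X ⁻¹' B)) ≤ μ.real {ω | c ≤ dist (X ω) (X' ω)} := by
  have h_disj : Disjoint A B := disjoint_left.2 fun x hxA hxB => by
    have := hAB x hxA x hxB
    rw [dist_self] at this
    linarith
  have h_prod : ∀ {s t : Set E}, MeasurableSet s → MeasurableSet t →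
      μ.real (X ⁻¹' s ∩ X' ⁻¹' t) = μ.real (X ⁻¹' s) * μ.real (X ⁻¹' t) := by
    intro s t hs ht
    rw [measureReal_def, hindep.measure_inter_preimage_eq_mul _ _ hs ht, ENNReal.toReal_mul,
      ← Measure.map_apply hX' ht, ← hid, Measure.map_apply hX ht]
    rfl
  calc 2 * (μ.real (X ⁻¹' A) * μ.real (X ⁻¹' B))
      = μ.real (X ⁻¹' A ∩ X' ⁻¹' B) + μ.real (X ⁻¹' B ∩ X' ⁻¹' A) := by
        rw [h_prod hA hB, h_prod hB hA]; ring
    _ = μ.real (X ⁻¹' A ∩ X' ⁻¹' B ∪ X ⁻¹' B ∩ X' ⁻¹' A) :=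
        (measureReal_union ((h_disj.preimage X).mono inter_subset_left inter_subset_left)
          ((hX hB).inter (hX' hA))).symm
    _ ≤ μ.real {ω | c ≤ dist (X ω) (X' ω)} := by
        refine measureReal_mono ?_
        rintro ω (⟨hωA, hωB⟩ | ⟨hωB, hωA⟩)
        · exact hAB _ hωA _ hωB
        · show c ≤ dist _ _
          rw [dist_comm]
          exact hAB _ hωA _ hωB

end ProbabilityTheory

/-- If `Q(X) ≤ 1 - p` and `X'` is an independent copy of `X`, then
`P(|X - X'| ≥ 2) ≥ p²/2`. -/
theorem symmetrization_spread {Ω : Type*} [MeasurableSpace Ω] (μ : Measure Ω)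
    [IsProbabilityMeasure μ] (X X' : Ω → ℝ) (hX : Measurable X) (hX' : Measurable X')
    (hindep : IndepFun X X' μ) (hid : Measure.map X μ = Measure.map X' μ)
    (p : ℝ) (hp0 : 0 < p) (hp1 : p ≤ 1)
    (hconc : ∀ x : ℝ, (μ {ω | |X ω - x| ≤ 1}).toReal ≤ 1 - p) :
    p ^ 2 / 2 ≤ (μ {ω | 2 ≤ |X ω - X' ω|}).toReal := by
  set ν := μ.map X
  have : IsProbabilityMeasure ν := Measure.isProbabilityMeasure_map hX.aemeasurable
  have hν {s : Set ℝ} (hs : MeasurableSet s) : ν.real s = μ.real (X ⁻¹' s) :=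
    map_measureReal_apply hX hs
  obtain ⟨a, h_Iio, h_Iic⟩ :=
    exists_measureReal_Iio_le_le_measureReal_Iic ν (half_pos hp0) (by linarith)
  have h_Icc : ν.real (Icc a (a + 2)) ≤ 1 - p := by
    have h_ball : Icc a (a + 2) = Metric.closedBall (a + 1) 1 := by
      rw [Real.closedBall_eq_Icc]; norm_num [one_add_one_eq_two, add_assoc]
    rw [h_ball, hν measurableSet_closedBall]
    exact hconc (a + 1)
  have h_Ioi : p / 2 ≤ ν.real (Ioi (a + 2)) := by
    linarith [measureReal_Iio_add_Icc_add_Ioi ν (by linarith : a ≤ a + 2)]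
  have h_spread := hindep.two_mul_measureReal_mul_le_measureReal_le_dist hX hX' hid
    (A := Iic a) (B := Ioi (a + 2)) measurableSet_Iic measurableSet_Ioi two_pos
    fun x hx y hy => by
      rw [Real.dist_eq, abs_sub_comm]
      linarith [le_abs_self (y - x), mem_Iic.1 hx, mem_Ioi.1 hy]
  rw [← hν measurableSet_Iic, ← hν measurableSet_Ioi] at h_spread
  have h_prod : p / 2 * (p / 2) ≤ ν.real (Iic a) * ν.real (Ioi (a + 2)) :=
    mul_le_mul h_Iic h_Ioi (half_pos hp0).le measureReal_nonneg
  calc p ^ 2 / 2 = 2 * (p / 2 * (p / 2)) := by ring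
    _ ≤ _ := by gcongr
    _ ≤ _ := h_spread
end

section
/- Let X_1, …, X_n be i.i.d. real random variables with common characteristic function φ. Then for every x ∈ ℝ and real coefficients a_1, …, a_n, P(|Σ_k a_k X_k − x| ≤ 1) ≤ e · (1/√π) ∫_{−∞}^{∞} Π_{k=1}^n |φ(2 a_k η)| · exp(−η^2) dη. -/
open MeasureTheory ProbabilityTheory Real

open scoped Complex

/-! On `|y - x| ≤ 1` we have `exp (-(y - x) ^ 2) ≥ e⁻¹`, so the probability is at most
`e · E exp (-(S - x) ^ 2)`. The Gaussian is its own Fourier transform,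
`√π exp (-u ^ 2) = ∫ exp (2iuη) exp (-η ^ 2) dη`; integrating this against the law of `S` and
swapping the integrals expresses `√π · E exp (-(S - x) ^ 2)` through the characteristic function
of `S = ∑ aₖ Xₖ` at `2η`, whose modulus factors over the independent summands. -/

lemma measureReal_closedBall_le_exp_one_mul_integral {ν : Measure ℝ} [IsFiniteMeasure ν]
    (x : ℝ) : ν.real (Metric.closedBall x 1) ≤ exp 1 * ∫ y, exp (-(y - x) ^ 2) ∂ν := by
  have hint : Integrable (fun y ↦ exp (-(y - x) ^ 2)) ν :=
    (integrable_const 1).mono' (by fun_prop) (ae_of_all _ fun y ↦ by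
      simpa [abs_of_pos (exp_pos _)] using sq_nonneg (y - x))
  have hball : Metric.closedBall x 1 = {y | exp (-1) ≤ exp (-(y - x) ^ 2)} := by
    ext y
    simp [Real.dist_eq, ← sq_le_one_iff_abs_le_one]
  have hmarkov :=
    mul_meas_ge_le_integral_of_nonneg (ae_of_all _ fun y ↦ (exp_pos _).le) hint (exp (-1))
  rw [← hball] at hmarkov
  calc ν.real (Metric.closedBall x 1) = exp 1 * (exp (-1) * ν.real (Metric.closedBall x 1)) := by
        rw [← mul_assoc, ← exp_add]; simp
    _ ≤ _ := by gcongr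

lemma norm_cexp_mul_I_mul_gaussian (r η : ℝ) :
    ‖cexp (r * Complex.I) * cexp (-(η : ℂ) ^ 2)‖ = exp (-η ^ 2) := by
  rw [norm_mul, Complex.norm_exp_ofReal_mul_I, one_mul, ← Complex.ofReal_pow,
    ← Complex.ofReal_neg, Complex.norm_exp_ofReal]

lemma integral_cexp_two_mul_mul_I_mul_gaussian (y : ℝ) :
    ∫ η : ℝ, cexp (2 * y * η * Complex.I) * cexp (-(η : ℂ) ^ 2)
      = √π * cexp (-(y : ℂ) ^ 2) := by
  have h := fourierIntegral_gaussian (b := 1) one_pos (2 * y : ℂ)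
  simp only [neg_mul, one_mul, div_one] at h
  convert h using 2
  · ext η; ring_nf
  · rw [show (1 / 2 : ℂ) = ((1 / 2 : ℝ) : ℂ) by norm_num, ← Complex.ofReal_cpow pi_nonneg,
      sqrt_eq_rpow]
  · congr 1; ring

lemma sqrt_pi_mul_integral_exp_neg_sq_le_integral_norm_charFun {ν : Measure ℝ}
    [IsFiniteMeasure ν] (x : ℝ) :
    √π * ∫ y, exp (-(y - x) ^ 2) ∂ν ≤ ∫ η, ‖charFun ν (2 * η)‖ * exp (-η ^ 2) := by
  set F : ℝ → ℝ → ℂ := fun y η ↦ cexp (↑(2 * (y - x) * η) * Complex.I) * cexp (-(η : ℂ) ^ 2)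
  have hF : Integrable (Function.uncurry F) (ν.prod volume) := by
    have hgauss : Integrable (fun η : ℝ ↦ exp (-η ^ 2)) := by
      simpa using integrable_exp_neg_mul_sq one_pos
    refine (hgauss.comp_snd ν).mono' (by fun_prop) (ae_of_all _ fun p ↦ ?_)
    exact (norm_cexp_mul_I_mul_gaussian _ _).le
  have h_dy (η : ℝ) : ∫ y, F y η ∂ν
      = cexp (↑(-2 * x * η) * Complex.I) * charFun ν (2 * η) * cexp (-(η : ℂ) ^ 2) := by
    rw [charFun_apply_real, ← integral_const_mul, ← integral_mul_const]
    congr 1 with y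
    simp only [F, ← Complex.exp_add]
    congr 2
    push_cast
    ring
  have h_dη (y : ℝ) : ∫ η, F y η = √π * ↑(exp (-(y - x) ^ 2)) := by
    simpa [F, mul_assoc] using integral_cexp_two_mul_mul_I_mul_gaussian (y - x)
  calc √π * ∫ y, exp (-(y - x) ^ 2) ∂ν = ‖∫ y, (∫ η, F y η) ∂ν‖ := by
        simp only [h_dη, integral_const_mul, integral_complex_ofReal, norm_mul, Complex.norm_real,
          norm_of_nonneg (sqrt_nonneg π), norm_of_nonneg (integral_nonneg fun y ↦ (exp_pos _).le)]
    _ = ‖∫ η, ∫ y, F y η ∂ν‖ := by rw [integral_integral_swap hF]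
    _ ≤ ∫ η, ‖∫ y, F y η ∂ν‖ := norm_integral_le_integral_norm _
    _ = ∫ η, ‖charFun ν (2 * η)‖ * exp (-η ^ 2) := by
        congr 1 with η
        rw [h_dy, mul_right_comm, norm_mul, norm_cexp_mul_I_mul_gaussian, mul_comm]

lemma measureReal_closedBall_le_integral_norm_charFun {ν : Measure ℝ} [IsFiniteMeasure ν]
    (x : ℝ) :
    ν.real (Metric.closedBall x 1)
      ≤ exp 1 * ((√π)⁻¹ * ∫ η, ‖charFun ν (2 * η)‖ * exp (-η ^ 2)) := by
  refine (measureReal_closedBall_le_exp_one_mul_integral x).trans ?_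
  gcongr
  rw [le_inv_mul_iff₀ (sqrt_pos.2 pi_pos)]
  exact sqrt_pi_mul_integral_exp_neg_sq_le_integral_norm_charFun x

lemma ProbabilityTheory.iIndepFun.charFun_map_fun_sum_mul_eq_prod {Ω ι : Type*} [Fintype ι]
    [MeasurableSpace Ω] {μ : Measure Ω} {X : ι → Ω → ℝ} (hX : iIndepFun X μ)
    (mX : ∀ i, Measurable (X i)) (a : ι → ℝ) (t : ℝ) :
    charFun (μ.map fun ω ↦ ∑ i, a i * X i ω) t = ∏ i, charFun (μ.map (X i)) (a i * t) := by
  have hY : iIndepFun (fun i ω ↦ a i * X i ω) μ :=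
    hX.comp (fun i y ↦ a i * y) fun i ↦ measurable_const_mul (a i)
  rw [hY.charFun_map_fun_sum_eq_prod fun i ↦ ((mX i).const_mul (a i)).aemeasurable,
    Finset.prod_apply]
  exact Finset.prod_congr rfl fun i _ ↦ charFun_map_mul_comp (mX i).aemeasurable (a i) t

theorem conc_le_char_integral_general {Ω : Type*} [MeasurableSpace Ω] (μ : Measure Ω)
    [IsProbabilityMeasure μ] (n : ℕ) (X : Fin n → Ω → ℝ)
    (hmeas : ∀ k, Measurable (X k))
    (hindep : iIndepFun X μ)
    (φ : ℝ → ℂ)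
    (hφ : ∀ k (t : ℝ), φ t = ∫ ω, Complex.exp (Complex.I * t * X k ω) ∂μ)
    (a : Fin n → ℝ) (x : ℝ) :
    (μ {ω | |∑ k, a k * X k ω - x| ≤ 1}).toReal ≤
      Real.exp 1 * ((Real.sqrt Real.pi)⁻¹ *
        ∫ η : ℝ, (∏ k, ‖φ (2 * a k * η)‖) * Real.exp (-η ^ 2)) := by
  have hS : Measurable fun ω ↦ ∑ k, a k * X k ω := by fun_prop
  have hφ_charFun (k : Fin n) (t : ℝ) : φ t = charFun (μ.map (X k)) t := by
    rw [hφ k t, charFun_apply_real, integral_map (hmeas k).aemeasurable (by fun_prop)]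
    congr 1 with ω
    congr 1
    ring
  have hset : {ω | |∑ k, a k * X k ω - x| ≤ 1}
      = (fun ω ↦ ∑ k, a k * X k ω) ⁻¹' Metric.closedBall x 1 := by
    ext ω
    simp [Real.dist_eq]
  rw [hset, ← Measure.map_apply hS Metric.isClosed_closedBall.measurableSet, ← measureReal_def]
  refine (measureReal_closedBall_le_integral_norm_charFun x).trans_eq ?_
  congr 3 with η
  rw [hindep.charFun_map_fun_sum_mul_eq_prod hmeas, norm_prod]
  congr 1
  refine Finset.prod_congr rfl fun k _ ↦ ?_
  rw [hφ_charFun k, mul_left_comm, mul_assoc]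

/-- For i.i.d. `X₁,…,Xₙ` with characteristic function `φ`,
`P(|Σ aₖ Xₖ − x| ≤ 1) ≤ e·(1/√π)·∫ Πₖ |φ(2aₖη)| e^{−η²} dη`. -/
theorem conc_le_char_integral {Ω : Type*} [MeasurableSpace Ω] (μ : Measure Ω)
    [IsProbabilityMeasure μ] (n : ℕ) (X : Fin n → Ω → ℝ)
    (hmeas : ∀ k, Measurable (X k))
    (hindep : iIndepFun X μ)
    (hid : ∀ k l, Measure.map (X k) μ = Measure.map (X l) μ)
    (φ : ℝ → ℂ)
    (hφ : ∀ k (t : ℝ), φ t = ∫ ω, Complex.exp (Complex.I * t * X k ω) ∂μ)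
    (a : Fin n → ℝ) (x : ℝ) :
    (μ {ω | |∑ k, a k * X k ω - x| ≤ 1}).toReal ≤
      Real.exp 1 * ((Real.sqrt Real.pi)⁻¹ *
        ∫ η : ℝ, (∏ k, ‖φ (2 * a k * η)‖) * Real.exp (-η ^ 2)) :=
  conc_le_char_integral_general μ n X hmeas hindep φ hφ a x
end

section
/- Let X be a real random variable with characteristic function φ, X' an independent copy, X̄ = X − X', and q = P(|X̄| ≥ 2) > 0. Then for any reals b_1,…,b_n and any probability density weight, ∫_{−∞}^{∞} Π_k |φ(b_k η)| e^{−η^2} dη/√π ≤ sup_{z ≥ 2} ∫_{−∞}^{∞} exp(−(q/2) Σ_k (1 − cos(b_k η z)) − η^2) dη/√π. -/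
/-! For the symmetrization `X̄ = X - X'` one has `E cos (t X̄) = ‖φ t‖ ^ 2`, and
`a ≤ exp ((a² - 1) / 2)` for every real `a`. Discarding `E (1 - cos (t X̄))` off the event
`A = {|X̄| ≥ 2}` and rewriting the rest through the conditional law `P[·|A]` gives
`‖φ t‖ ≤ exp (-(q / 2) E[1 - cos (t X̄) | A])`. Multiplying over `k` and applying Jensen's
inequality to `exp` bounds the product by `E[exp (-(q / 2) ∑ₖ (1 - cos (bₖ η X̄))) | A]`.
After integrating against the Gaussian weight, Fubini moves the conditional expectation outside,
and since `|X̄| ≥ 2` almost surely under `P[·|A]` (and `cos` is even) the inner integral is at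
most its supremum over `z ≥ 2`. -/

open MeasureTheory ProbabilityTheory
open Real ComplexConjugate

lemma le_exp_sq_sub_one_div_two (a : ℝ) : a ≤ exp ((a ^ 2 - 1) / 2) :=
  calc a ≤ exp (a - 1) := by linarith [add_one_le_exp (a - 1)]
    _ ≤ exp ((a ^ 2 - 1) / 2) := exp_le_exp.2 (by nlinarith [sq_nonneg (a - 1)])

lemma cos_mul_abs (c y : ℝ) : cos (c * |y|) = cos (c * y) := by
  rcases abs_cases y with ⟨h, _⟩ | ⟨h, _⟩ <;> simp [h]

lemma integrable_exp_neg_sq_div_sqrt_pi : Integrable fun η : ℝ ↦ exp (-η ^ 2) / √π := by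
  simpa using (integrable_exp_neg_mul_sq one_pos).div_const √π

lemma norm_exp_neg_mul_sum_one_sub_cos_sub_sq_div_le {ι : Type*} [Fintype ι] {c : ℝ}
    (hc : 0 ≤ c) (b : ι → ℝ) (η z : ℝ) :
    ‖exp (-(c * ∑ k, (1 - cos (b k * η * z))) - η ^ 2) / √π‖ ≤ exp (-η ^ 2) / √π := by
  have : 0 ≤ c * ∑ k, (1 - cos (b k * η * z)) :=
    mul_nonneg hc (Finset.sum_nonneg fun k _ ↦ by simp [cos_le_one])
  rw [Real.norm_of_nonneg (by positivity)]
  gcongr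
  linarith

lemma integrable_cos_mul {Ω : Type*} [MeasurableSpace Ω] {ν : Measure Ω} [IsFiniteMeasure ν]
    {Y : Ω → ℝ} (hY : AEMeasurable Y ν) (t : ℝ) : Integrable (fun ω ↦ cos (t * Y ω)) ν :=
  .of_bound (by fun_prop) 1 (.of_forall fun _ ↦ by simpa using abs_cos_le_one _)

lemma exp_neg_integral_le_integral_exp_neg {Ω : Type*} [MeasurableSpace Ω] {ν : Measure Ω}
    [IsProbabilityMeasure ν] {h : Ω → ℝ} (hh : Integrable h ν)
    (hexp : Integrable (fun ω ↦ exp (-h ω)) ν) :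
    exp (-∫ ω, h ω ∂ν) ≤ ∫ ω, exp (-h ω) ∂ν := by
  rw [← integral_neg]
  exact convexOn_exp.map_integral_le continuous_exp.continuousOn isClosed_univ
    (by simp) hh.neg hexp

lemma setIntegral_eq_measureReal_mul_integral_cond {Ω : Type*} [MeasurableSpace Ω]
    {μ : Measure Ω} [IsFiniteMeasure μ] (A : Set Ω) (g : Ω → ℝ) :
    ∫ ω in A, g ω ∂μ = μ.real A * ∫ ω, g ω ∂μ[|A] := by
  rcases eq_or_ne (μ A) 0 with hA | hA
  · simp [Measure.restrict_eq_zero.2 hA, measureReal_def, hA]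
  · rw [ProbabilityTheory.cond, integral_smul_measure, smul_eq_mul, ← mul_assoc,
      ENNReal.toReal_inv, ← measureReal_def, mul_inv_cancel₀ ((measureReal_ne_zero_iff).2 hA),
      one_mul]

section Symmetrization

variable {Ω : Type*} [MeasurableSpace Ω] {μ : Measure Ω} [IsProbabilityMeasure μ]
  {X X' : Ω → ℝ}

lemma sq_norm_charFun_map_eq_integral_cos_sub (hX : AEMeasurable X μ)
    (hX' : AEMeasurable X' μ) (hindep : IndepFun X X' μ) (hid : μ.map X = μ.map X') (t : ℝ) :
    ‖charFun (μ.map X) t‖ ^ 2 = ∫ ω, cos (t * (X ω - X' ω)) ∂μ := by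
  have hneg : charFun (μ.map fun ω ↦ -1 * X' ω) t = conj (charFun (μ.map X) t) := by
    rw [charFun_map_mul_comp hX', ← hid, neg_one_mul, charFun_neg]
  have hsub : charFun (μ.map fun ω ↦ X ω + -1 * X' ω) t
      = charFun (μ.map X) t * conj (charFun (μ.map X) t) := by
    rw [(hindep.comp measurable_id (measurable_const_mul (-1))).charFun_map_fun_add_eq_mul hX
      (hX'.const_mul _), Pi.mul_apply, hneg]
  have hY : AEMeasurable (fun ω ↦ X ω + -1 * X' ω) μ := hX.add (hX'.const_mul _)
  have hint : Integrable (fun ω ↦ Complex.exp (↑(t * (X ω + -1 * X' ω)) * Complex.I)) μ :=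
    Integrable.of_bound (by fun_prop) 1 (.of_forall fun ω ↦ (Complex.norm_exp_ofReal_mul_I _).le)
  have hre : ∫ ω, cos (t * (X ω - X' ω)) ∂μ
      = (charFun (μ.map fun ω ↦ X ω + -1 * X' ω) t).re := by
    rw [charFun_apply_real, integral_map hY (by fun_prop)]
    simp_rw [← Complex.ofReal_mul]
    rw [← RCLike.re_to_complex, ← integral_re hint]
    congr 1 with ω
    rw [RCLike.re_to_complex, Complex.exp_ofReal_mul_I_re]
    ring_nf
  rw [hre, hsub, Complex.mul_conj, Complex.ofReal_re, Complex.normSq_eq_norm_sq]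

lemma norm_charFun_map_le_exp_integral_cond (hX : Measurable X) (hX' : Measurable X')
    (hindep : IndepFun X X' μ) (hid : μ.map X = μ.map X') (A : Set Ω) (t : ℝ) :
    ‖charFun (μ.map X) t‖ ≤
      exp (-(μ.real A / 2 * ∫ ω, (1 - cos (t * (X ω - X' ω))) ∂μ[|A])) := by
  set a := ‖charFun (μ.map X) t‖
  have hcos := integrable_cos_mul (ν := μ) (Y := fun ω ↦ X ω - X' ω) (by fun_prop) t
  have htotal : ∫ ω, (1 - cos (t * (X ω - X' ω))) ∂μ = 1 - a ^ 2 := by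
    rw [integral_sub (integrable_const 1) hcos,
      sq_norm_charFun_map_eq_integral_cos_sub hX.aemeasurable hX'.aemeasurable hindep hid]
    simp
  have hrestrict : μ.real A * ∫ ω, (1 - cos (t * (X ω - X' ω))) ∂μ[|A] ≤ 1 - a ^ 2 := by
    rw [← setIntegral_eq_measureReal_mul_integral_cond, ← htotal]
    exact setIntegral_le_integral ((integrable_const 1).sub hcos)
      (.of_forall fun ω ↦ by simp [cos_le_one])
  calc a ≤ exp ((a ^ 2 - 1) / 2) := le_exp_sq_sub_one_div_two a
    _ ≤ _ := exp_le_exp.2 (by linarith)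

lemma prod_norm_charFun_map_le_integral_exp_cond {ι : Type*} [Fintype ι] (hX : Measurable X)
    (hX' : Measurable X') (hindep : IndepFun X X' μ) (hid : μ.map X = μ.map X') {A : Set Ω}
    (hA : μ A ≠ 0) (t : ι → ℝ) :
    ∏ i, ‖charFun (μ.map X) (t i)‖ ≤
      ∫ ω, exp (-(μ.real A / 2 * ∑ i, (1 - cos (t i * (X ω - X' ω))))) ∂μ[|A] := by
  have := cond_isProbabilityMeasure hA
  have hterm (i : ι) : Integrable (fun ω ↦ 1 - cos (t i * (X ω - X' ω))) μ[|A] :=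
    (integrable_const 1).sub (integrable_cos_mul (Y := fun ω ↦ X ω - X' ω) (by fun_prop) (t i))
  have hnonneg (ω : Ω) : 0 ≤ μ.real A / 2 * ∑ i, (1 - cos (t i * (X ω - X' ω))) :=
    mul_nonneg (by positivity) (Finset.sum_nonneg fun i _ ↦ by simp [cos_le_one])
  calc ∏ i, ‖charFun (μ.map X) (t i)‖
      ≤ ∏ i, exp (-(μ.real A / 2 * ∫ ω, (1 - cos (t i * (X ω - X' ω))) ∂μ[|A])) :=
        Finset.prod_le_prod (fun i _ ↦ norm_nonneg _)
          fun i _ ↦ norm_charFun_map_le_exp_integral_cond hX hX' hindep hid A (t i)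
    _ = exp (-∫ ω, μ.real A / 2 * ∑ i, (1 - cos (t i * (X ω - X' ω))) ∂μ[|A]) := by
        rw [← exp_sum, integral_const_mul, integral_finsetSum _ fun i _ ↦ hterm i,
          Finset.mul_sum, ← Finset.sum_neg_distrib]
    _ ≤ _ := exp_neg_integral_le_integral_exp_neg
        ((integrable_finsetSum _ fun i _ ↦ hterm i).const_mul _)
        (.of_bound (by fun_prop) 1 (.of_forall fun ω ↦ by
          simpa [abs_of_pos (exp_pos _)] using hnonneg ω))

end Symmetrization

section IteratedIntegral

variable {α β Ω : Type*} [MeasurableSpace α] [MeasurableSpace β] [MeasurableSpace Ω]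
  {m : Measure β} {ν : Measure Ω} {G : β → α → ℝ} {w : β → ℝ} {Y : Ω → α}

lemma integrable_prod_comp_of_norm_le [IsFiniteMeasure ν] (hG : Measurable (Function.uncurry G))
    (hw : Integrable w m) (hGw : ∀ η z, ‖G η z‖ ≤ w η) (hY : Measurable Y) :
    Integrable (fun x : β × Ω ↦ G x.1 (Y x.2)) (m.prod ν) :=
  (hw.comp_fst ν).mono'
    (hG.comp (measurable_fst.prodMk (hY.comp measurable_snd))).aestronglyMeasurable
    (.of_forall fun x ↦ hGw x.1 _)

lemma integral_integral_comp_le_iSup [SFinite m] [IsProbabilityMeasure ν]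
    (hG : Measurable (Function.uncurry G)) (hw : Integrable w m) (hGw : ∀ η z, ‖G η z‖ ≤ w η)
    (hY : Measurable Y) {p : α → Prop} (hp : ∀ᵐ ω ∂ν, p (Y ω)) :
    ∫ η, ∫ ω, G η (Y ω) ∂ν ∂m ≤ ⨆ z : {z // p z}, ∫ η, G η z ∂m := by
  have hint := integrable_prod_comp_of_norm_le (ν := ν) hG hw hGw hY
  have hbdd : BddAbove (Set.range fun z : {z // p z} ↦ ∫ η, G η z ∂m) := by
    refine ⟨∫ η, w η ∂m, ?_⟩
    rintro _ ⟨z, rfl⟩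
    exact (le_abs_self _).trans (norm_integral_le_of_norm_le hw (.of_forall fun η ↦ hGw η z))
  calc ∫ η, ∫ ω, G η (Y ω) ∂ν ∂m = ∫ ω, ∫ η, G η (Y ω) ∂m ∂ν := integral_integral_swap hint
    _ ≤ ∫ _ω, ⨆ z : {z // p z}, ∫ η, G η z ∂m ∂ν :=
        integral_mono_ae hint.integral_prod_right (integrable_const _)
          (hp.mono fun ω hω ↦ le_ciSup hbdd ⟨Y ω, hω⟩)
    _ = ⨆ z : {z // p z}, ∫ η, G η z ∂m := by simp

end IteratedIntegral

/-- Step 2 bound: the characteristic-function integral is bounded by the supremum over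
`z ≥ 2` of the corresponding cosine-sum integral. -/
theorem char_integral_le_sup_cos {Ω : Type*} [MeasurableSpace Ω] (μ : Measure Ω)
    [IsProbabilityMeasure μ] (X X' : Ω → ℝ) (hX : Measurable X) (hX' : Measurable X')
    (hindep : IndepFun X X' μ) (hid : Measure.map X μ = Measure.map X' μ)
    (φ : ℝ → ℂ) (hφ : ∀ t : ℝ, φ t = ∫ ω, Complex.exp (Complex.I * t * X ω) ∂μ)
    (hq : 0 < (μ {ω | 2 ≤ |X ω - X' ω|}).toReal)
    (n : ℕ) (b : Fin n → ℝ) :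
    (∫ η : ℝ, (∏ k, ‖φ (b k * η)‖) * Real.exp (-η ^ 2) /
        Real.sqrt Real.pi) ≤
      ⨆ z : {z : ℝ // 2 ≤ z},
        ∫ η : ℝ,
          Real.exp (-((μ {ω | 2 ≤ |X ω - X' ω|}).toReal / 2 *
              ∑ k, (1 - Real.cos (b k * η * (z : ℝ)))) - η ^ 2) /
            Real.sqrt Real.pi := by
  set A := {ω | 2 ≤ |X ω - X' ω|}
  set q := (μ A).toReal
  have hA : μ A ≠ 0 := fun h ↦ by simp [q, h] at hq
  have := cond_isProbabilityMeasure hA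
  have hφX : φ = charFun (μ.map X) := funext fun t ↦ by
    rw [hφ, charFun_apply_real, integral_map hX.aemeasurable (by fun_prop)]
    congr with ω
    ring_nf
  set F : ℝ → ℝ → ℝ := fun η z ↦ exp (-(q / 2 * ∑ k, (1 - cos (b k * η * z))) - η ^ 2) / √π
  have hFw (η z : ℝ) : ‖F η z‖ ≤ exp (-η ^ 2) / √π :=
    norm_exp_neg_mul_sum_one_sub_cos_sub_sq_div_le (by positivity) b η z
  have hF : Measurable (Function.uncurry F) := by
    refine Continuous.measurable ?_
    simp only [F, Function.uncurry_def]
    fun_prop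
  have hpoint (η : ℝ) :
      (∏ k, ‖φ (b k * η)‖) * exp (-η ^ 2) / √π ≤ ∫ ω, F η |X ω - X' ω| ∂μ[|A] :=
    calc (∏ k, ‖φ (b k * η)‖) * exp (-η ^ 2) / √π
        = (∏ k, ‖charFun (μ.map X) (b k * η)‖) * (exp (-η ^ 2) / √π) := by
          rw [hφX, mul_div_assoc]
      _ ≤ (∫ ω, exp (-(q / 2 * ∑ k, (1 - cos (b k * η * (X ω - X' ω))))) ∂μ[|A]) *
            (exp (-η ^ 2) / √π) := by
          gcongr
          exact prod_norm_charFun_map_le_integral_exp_cond hX hX' hindep hid hA (b · * η)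
      _ = ∫ ω, F η |X ω - X' ω| ∂μ[|A] := by
          rw [← integral_mul_const]
          congr with ω
          simp only [F, cos_mul_abs, mul_div_assoc', ← exp_add, sub_eq_add_neg]
  have hY : Measurable fun ω ↦ |X ω - X' ω| := (hX.sub hX').abs
  have hw := integrable_exp_neg_sq_div_sqrt_pi
  calc _ ≤ ∫ η, ∫ ω, F η |X ω - X' ω| ∂μ[|A] :=
        integral_mono_of_nonneg (.of_forall fun η ↦ by positivity)
          (integrable_prod_comp_of_norm_le hF hw hFw hY).integral_prod_left (.of_forall hpoint)
    _ ≤ ⨆ z : {z : ℝ // 2 ≤ z}, ∫ η, F η z :=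
        integral_integral_comp_le_iSup hF hw hFw hY
          (ae_cond_mem (measurableSet_le measurable_const hY))
end
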